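/- The iterated construction B_rec is {C_4^3, F_5-bar}-free: if H is a 3-graph on V = V1 ∪ V2 (V1 nonempty) whose edge set is the union of B[V1, V2] (all triples with exactly two vertices in V1) and the edge set of a {C_4^3, F_5-bar}-free 3-graph on V2, then H is {C_4^3, F_5-bar}-free. -/
import Mathlib


open Finset

/-- `H` contains a copy of the 3-graph with edge set `F`. -/
def HasCopy {α β : Type*} [DecidableEq β] (F : Finset (Finset α)) (H : Finset (Finset β)) : Prop :=
  ∃ φ : α → β, Function.Injective φ ∧ ∀ e ∈ F, e.image φ ∈ H

/-- `K_4^3 = C_4^3`: the complete 3-graph on 4 vertices (all 4 triples). -/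
def K43 : Finset (Finset (Fin 4)) := Finset.powersetCard 3 (Finset.univ : Finset (Fin 4))

/-- The complement of `F_5 = ([5], {123, 145, 245})`: the remaining 7 triples on 5 vertices. -/
def F5bar : Finset (Finset (Fin 5)) :=
  (Finset.powersetCard 3 (Finset.univ : Finset (Fin 5))) \ {{0, 1, 2}, {0, 3, 4}, {1, 3, 4}}

lemma image_inter_card {α V : Type*} [DecidableEq α] [DecidableEq V]
    (φ : α → V) (hφ : Function.Injective φ) (e : Finset α) (V1 : Finset V) :
    ((e.image φ) ∩ V1).card = (e.filter fun i => φ i ∈ V1).card := by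
  have h : (e.image φ) ∩ V1 = (e.filter fun i => φ i ∈ V1).image φ := by
    ext x
    simp only [mem_inter, mem_image, mem_filter]
    constructor
    · rintro ⟨⟨i, hi, rfl⟩, hx⟩; exact ⟨i, ⟨hi, hx⟩, rfl⟩
    · rintro ⟨i, ⟨hi, hx⟩, rfl⟩; exact ⟨⟨i, hi, rfl⟩, hx⟩
  rw [h, card_image_of_injective _ hφ]

lemma keyK : ∀ f : Fin 4 → Bool,
    (∀ e ∈ K43, (e.filter fun i => f i = true).card = 2 ∨ ∀ i ∈ e, f i = false) →
    ∀ i, f i = false := by decide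

lemma keyF : ∀ f : Fin 5 → Bool,
    (∀ e ∈ F5bar, (e.filter fun i => f i = true).card = 2 ∨ ∀ i ∈ e, f i = false) →
    ∀ i, f i = false := by decide

lemma main_aux {α V : Type*} [DecidableEq α] [Fintype V] [DecidableEq V]
    (F : Finset (Finset α))
    (hkey : ∀ f : α → Bool,
      (∀ e ∈ F, (e.filter fun i => f i = true).card = 2 ∨ ∀ i ∈ e, f i = false) →
      ∀ i, f i = false)
    (V1 V2 : Finset V) (hdisj : Disjoint V1 V2) (hcover : V1 ∪ V2 = Finset.univ)
    (G : Finset (Finset V)) (hG : ∀ e ∈ G, e ⊆ V2 ∧ e.card = 3)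
    (hGF : ¬ HasCopy F G) :
    ¬ HasCopy F ((((V1 ∪ V2).powersetCard 3).filter (fun e => (e ∩ V1).card = 2)) ∪ G) := by
  rintro ⟨φ, hinj, hmem⟩
  set f : α → Bool := fun i => decide (φ i ∈ V1) with hf
  have hcond : ∀ e ∈ F, (e.filter fun i => f i = true).card = 2 ∨ ∀ i ∈ e, f i = false := by
    intro e he
    have := hmem e he
    rcases mem_union.mp this with hB | hGmem
    · left
      have h2 := (mem_filter.mp hB).2
      have : (e.filter fun i => f i = true) = (e.filter fun i => φ i ∈ V1) := by
        apply filter_congr; intro i _; simp [hf]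
      rw [this, ← image_inter_card φ hinj]
      exact h2
    · right
      intro i hi
      have hsub := (hG _ hGmem).1
      have : φ i ∈ V2 := hsub (mem_image_of_mem φ hi)
      simp [hf, Finset.disjoint_right.mp hdisj this]
  have hall := hkey f hcond
  apply hGF
  refine ⟨φ, hinj, fun e he => ?_⟩
  rcases mem_union.mp (hmem e he) with hB | hGmem
  · exfalso
    have h2 := (mem_filter.mp hB).2
    rw [image_inter_card φ hinj] at h2
    have : (e.filter fun i => φ i ∈ V1) = ∅ := by
      apply filter_eq_empty_iff.mpr
      intro i _ hi
      have := hall i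
      simp [hf, hi] at this
    rw [this] at h2
    simp at h2
  · exact hGmem

/-- Adding the complete semi-bipartite layer `B[V1, V2]` on top of a
`{C_4^3, F_5-bar}`-free 3-graph on `V2` preserves `{C_4^3, F_5-bar}`-freeness. -/
theorem stmt19 {V : Type*} [Fintype V] [DecidableEq V]
    (V1 V2 : Finset V) (hdisj : Disjoint V1 V2) (hcover : V1 ∪ V2 = Finset.univ)
    (hne : V1.Nonempty)
    (G : Finset (Finset V)) (hG : ∀ e ∈ G, e ⊆ V2 ∧ e.card = 3)
    (hGK : ¬ HasCopy K43 G) (hGF : ¬ HasCopy F5bar G) :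
    ¬ HasCopy K43
        ((((V1 ∪ V2).powersetCard 3).filter (fun e => (e ∩ V1).card = 2)) ∪ G) ∧
    ¬ HasCopy F5bar
        ((((V1 ∪ V2).powersetCard 3).filter (fun e => (e ∩ V1).card = 2)) ∪ G) := by
  exact ⟨main_aux K43 keyK V1 V2 hdisj hcover G hG hGK,
         main_aux F5bar keyF V1 V2 hdisj hcover G hG hGF⟩
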